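/- For a finite simple graph G, F_+(G) = 0 if and only if Z_+(G) = 1. -/

import Mathlib

open SimpleGraph

variable {V : Type*}

/-- One step of the standard zero forcing color-change rule: a blue vertex `u`
whose unique white neighbor is `v` forces `v` to become blue. -/
def zfStep (G : SimpleGraph V) (B : Set V) : Set V :=
  B ∪ {v | v ∉ B ∧ ∃ u ∈ B, G.Adj u v ∧ ∀ w, G.Adj u w → w ∉ B → w = v}

/-- `S` is a zero forcing set: iterating the standard color-change rule from `S`
eventually colors every vertex blue. -/
def IsZeroForcingSet (G : SimpleGraph V) (S : Set V) : Prop :=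
  (⋃ n, (zfStep G)^[n] S) = Set.univ

/-- The failed zero forcing number `F(G)`: the maximum cardinality of a set that
is not a zero forcing set. -/
noncomputable def failedZF (G : SimpleGraph V) : ℕ :=
  sSup {n | ∃ S : Set V, ¬ IsZeroForcingSet G S ∧ S.ncard = n}

/-- The zero forcing number `Z(G)`. -/
noncomputable def zfNumber (G : SimpleGraph V) : ℕ :=
  sInf {n | ∃ S : Set V, IsZeroForcingSet G S ∧ S.ncard = n}

/-- One step of the positive semidefinite color-change rule. -/
def psdStep (G : SimpleGraph V) (B : Set V) : Set V :=
  B ∪ {v | ∃ (hv : v ∉ B), ∃ u ∈ B, G.Adj u v ∧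
        ∀ (w : V) (hw : w ∉ B), G.Adj u w →
          (G.induce {x | x ∉ B}).Reachable ⟨w, hw⟩ ⟨v, hv⟩ → w = v}

/-- `S` is a positive semidefinite zero forcing set. -/
def IsPSDZeroForcingSet (G : SimpleGraph V) (S : Set V) : Prop :=
  (⋃ n, (psdStep G)^[n] S) = Set.univ

/-- The failed positive semidefinite zero forcing number `F₊(G)`. -/
noncomputable def failedPSD (G : SimpleGraph V) : ℕ :=
  sSup {n | ∃ S : Set V, ¬ IsPSDZeroForcingSet G S ∧ S.ncard = n}

/-- The positive semidefinite zero forcing number `Z₊(G)`. -/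
noncomputable def psdZFNumber (G : SimpleGraph V) : ℕ :=
  sInf {n | ∃ S : Set V, IsPSDZeroForcingSet G S ∧ S.ncard = n}

/-!
If a single vertex `a` forces `G`, then `G` is connected, and it is acyclic: the property
"every white component has at most one blue neighbor" holds for `{a}` and is preserved by the
color-change rule, and under it a white vertex turned blue in one step cannot have two distinct
neighbors that are blue after that step. Hence a cycle that is blue after a step was already blue
before it, and going back to `{a}` this is absurd. In a tree, conversely, every nonempty set
forces: a blue vertex on the boundary of a proper blue set forces its white neighbor, because a
second white neighbor in the same white component would close a cycle. So for a tree the empty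
set is the only failed set, while `F₊(G) = 0` makes every singleton forcing.
-/

namespace SimpleGraph

variable {G : SimpleGraph V} {B : Set V}

lemma subset_psdStep (G : SimpleGraph V) (B : Set V) : B ⊆ psdStep G B :=
  Set.subset_union_left

lemma monotone_psdStep_iterate (G : SimpleGraph V) (S : Set V) :
    Monotone fun n => (psdStep G)^[n] S :=
  fun _ _ hmn => Function.monotone_iterate_of_id_le (subset_psdStep G) hmn S

lemma exists_psdStep_iterate_eq_of_le [Finite V] (G : SimpleGraph V) (S : Set V) :
    ∃ n, ∀ m, n ≤ m → (psdStep G)^[n] S = (psdStep G)^[m] S :=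
  WellFoundedGT.monotone_chain_condition ⟨_, monotone_psdStep_iterate G S⟩

lemma isPSDZeroForcingSet_iff_exists_iterate_eq_univ [Finite V] {S : Set V} :
    IsPSDZeroForcingSet G S ↔ ∃ n, (psdStep G)^[n] S = Set.univ := by
  constructor
  · intro h
    obtain ⟨n, hn⟩ := exists_psdStep_iterate_eq_of_le G S
    refine ⟨n, Set.eq_univ_of_univ_subset (h ▸ Set.iUnion_subset fun m => ?_)⟩
    exact (monotone_psdStep_iterate G S (le_max_left m n)).trans (hn _ (le_max_right m n)).ge
  · rintro ⟨n, hn⟩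
    exact Set.eq_univ_of_univ_subset (hn ▸ Set.subset_iUnion (fun k => (psdStep G)^[k] S) n)

lemma psdStep_empty : psdStep G ∅ = ∅ := by
  simp [psdStep]

lemma not_isPSDZeroForcingSet_empty [Nonempty V] : ¬ IsPSDZeroForcingSet G ∅ := by
  simp [IsPSDZeroForcingSet, Function.iterate_fixed psdStep_empty, Set.empty_ne_univ]

lemma reachable_of_mem_psdStep_iterate {a v : V} {n : ℕ} (hv : v ∈ (psdStep G)^[n] {a}) :
    G.Reachable a v := by
  induction n generalizing v with
  | zero =>
    obtain rfl : v = a := hv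
    rfl
  | succ n ih =>
    rw [Function.iterate_succ_apply'] at hv
    obtain hv | ⟨-, u, hu, hadj, -⟩ := hv
    · exact ih hv
    · exact (ih hu).trans hadj.reachable

lemma preconnected_of_isPSDZeroForcingSet_singleton {a : V}
    (h : IsPSDZeroForcingSet G {a}) : G.Preconnected := by
  have hreach (v : V) : G.Reachable a v := by
    obtain ⟨n, hn⟩ := Set.mem_iUnion.mp (h.symm ▸ Set.mem_univ v)
    exact reachable_of_mem_psdStep_iterate hn
  exact fun x y => (hreach x).symm.trans (hreach y)

lemma exists_forcer_of_mem_psdStep {v : V} (hv' : v ∈ psdStep G B) (hv : v ∉ B) :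
    ∃ u ∈ B, G.Adj u v ∧ ∀ (w : V) (hw : w ∉ B), G.Adj u w →
      (G.induce {x | x ∉ B}).Reachable ⟨w, hw⟩ ⟨v, hv⟩ → w = v := by
  obtain h | ⟨_, h⟩ := hv'
  · exact absurd h hv
  · exact h

lemma Adj.reachable_induce_notMem {x y : V} (hx : x ∉ B) (hy : y ∉ B) (h : G.Adj x y) :
    (G.induce {x | x ∉ B}).Reachable ⟨x, hx⟩ ⟨y, hy⟩ :=
  Adj.reachable h

lemma Reachable.induce_notMem_of_subset {B' : Set V} (hBB' : B ⊆ B') {w₁ w₂ : V}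
    {hw₁ : w₁ ∉ B'} {hw₂ : w₂ ∉ B'} (h : (G.induce {x | x ∉ B'}).Reachable ⟨w₁, hw₁⟩ ⟨w₂, hw₂⟩) :
    (G.induce {x | x ∉ B}).Reachable ⟨w₁, fun hx => hw₁ (hBB' hx)⟩ ⟨w₂, fun hx => hw₂ (hBB' hx)⟩ :=
  h.map (G.induceHomOfLE fun x (hx : x ∉ B') (hxB : x ∈ B) => hx (hBB' hxB)).toHom

lemma Walk.IsCycle.exists_adj_ne_of_mem_support {v x : V} {c : G.Walk v v} (hc : c.IsCycle)
    (hx : x ∈ c.support) :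
    ∃ y ∈ c.support, ∃ z ∈ c.support, G.Adj x y ∧ G.Adj x z ∧ y ≠ z := by
  classical
  have hc' := hc.rotate hx
  refine ⟨_, ?_, _, ?_, (c.rotate x hx).adj_snd hc'.not_nil,
    ((c.rotate x hx).adj_penultimate hc'.not_nil).symm, hc'.snd_ne_penultimate⟩ <;>
  exact (c.mem_support_rotate_iff x hx).mp (Walk.getVert_mem_support _ _)

/-- Every connected component of the white graph `G[V ∖ B]` has at most one neighbor in `B`. -/
def AtMostOneBlueNeighbor (G : SimpleGraph V) (B : Set V) : Prop :=
  ∀ ⦃u₁ u₂ w₁ w₂ : V⦄, u₁ ∈ B → u₂ ∈ B → ∀ (hw₁ : w₁ ∉ B) (hw₂ : w₂ ∉ B),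
    G.Adj u₁ w₁ → G.Adj u₂ w₂ → (G.induce {x | x ∉ B}).Reachable ⟨w₁, hw₁⟩ ⟨w₂, hw₂⟩ → u₁ = u₂

lemma atMostOneBlueNeighbor_singleton (a : V) : AtMostOneBlueNeighbor G {a} :=
  fun _ _ _ _ h₁ h₂ _ _ _ _ _ => h₁.trans h₂.symm

lemma AtMostOneBlueNeighbor.not_adj_of_forced (hB : AtMostOneBlueNeighbor G B) {v w : V}
    (hv : v ∉ B) (hw : w ∉ B) (hv' : v ∈ psdStep G B) (hw' : w ∈ psdStep G B) : ¬ G.Adj v w := by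
  intro hvw
  obtain ⟨u, hu, huv, hforce⟩ := exists_forcer_of_mem_psdStep hv' hv
  obtain ⟨t, ht, htw, -⟩ := exists_forcer_of_mem_psdStep hw' hw
  have hwv := hvw.symm.reachable_induce_notMem hw hv
  obtain rfl : u = t := hB hu ht hv hw huv htw hwv.symm
  exact hvw.ne' (hforce w hw htw hwv)

lemma AtMostOneBlueNeighbor.mem_of_adj_ne_mem_psdStep (hB : AtMostOneBlueNeighbor G B)
    {x y z : V} (hxy : G.Adj x y) (hxz : G.Adj x z) (hyz : y ≠ z) (hx : x ∈ psdStep G B)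
    (hy : y ∈ psdStep G B) (hz : z ∈ psdStep G B) : x ∈ B := by
  by_contra hxB
  by_cases hyB : y ∈ B
  · by_cases hzB : z ∈ B
    · exact hyz (hB hyB hzB hxB hxB hxy.symm hxz.symm (Reachable.refl _))
    · exact hB.not_adj_of_forced hxB hzB hx hz hxz
  · exact hB.not_adj_of_forced hxB hyB hx hy hxy

lemma AtMostOneBlueNeighbor.support_subset_of_isCycle (hB : AtMostOneBlueNeighbor G B) {v : V}
    {c : G.Walk v v} (hc : c.IsCycle) (h : ∀ x ∈ c.support, x ∈ psdStep G B) :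
    ∀ x ∈ c.support, x ∈ B := by
  intro x hx
  obtain ⟨y, hy, z, hz, hxy, hxz, hyz⟩ := hc.exists_adj_ne_of_mem_support hx
  exact hB.mem_of_adj_ne_mem_psdStep hxy hxz hyz (h x hx) (h y hy) (h z hz)

lemma AtMostOneBlueNeighbor.not_reachable_of_forced (hB : AtMostOneBlueNeighbor G B)
    {u₁ u₂ w₁ w₂ : V} (hu₁ : u₁ ∈ B) (hu₂' : u₂ ∈ psdStep G B) (hu₂ : u₂ ∉ B)
    (hw₁ : w₁ ∉ psdStep G B) (hw₂ : w₂ ∉ psdStep G B) (ha₁ : G.Adj u₁ w₁) (ha₂ : G.Adj u₂ w₂) :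
    ¬ (G.induce {x | x ∉ psdStep G B}).Reachable ⟨w₁, hw₁⟩ ⟨w₂, hw₂⟩ := by
  intro hr
  obtain ⟨t, ht, htu₂, hforce⟩ := exists_forcer_of_mem_psdStep hu₂' hu₂
  have hw₁u₂ := (hr.induce_notMem_of_subset (subset_psdStep G B)).trans
    (ha₂.symm.reachable_induce_notMem _ hu₂)
  obtain rfl : u₁ = t := hB hu₁ ht _ hu₂ ha₁ htu₂ hw₁u₂
  exact hw₁ (hforce w₁ _ ha₁ hw₁u₂ ▸ hu₂')

lemma AtMostOneBlueNeighbor.psdStep (hB : AtMostOneBlueNeighbor G B) :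
    AtMostOneBlueNeighbor G (psdStep G B) := by
  intro u₁ u₂ w₁ w₂ hu₁ hu₂ hw₁ hw₂ ha₁ ha₂ hr
  have hrB := hr.induce_notMem_of_subset (subset_psdStep G B)
  by_cases h₁ : u₁ ∈ B <;> by_cases h₂ : u₂ ∈ B
  · exact hB h₁ h₂ _ _ ha₁ ha₂ hrB
  · exact (hB.not_reachable_of_forced h₁ hu₂ h₂ hw₁ hw₂ ha₁ ha₂ hr).elim
  · exact (hB.not_reachable_of_forced h₂ hu₁ h₁ hw₂ hw₁ ha₂ ha₁ hr.symm).elim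
  · obtain ⟨t₁, ht₁, htu₁, -⟩ := exists_forcer_of_mem_psdStep hu₁ h₁
    obtain ⟨t₂, ht₂, htu₂, hforce⟩ := exists_forcer_of_mem_psdStep hu₂ h₂
    have hu₁u₂ := ((ha₁.reachable_induce_notMem h₁ _).trans hrB).trans
      (ha₂.symm.reachable_induce_notMem _ h₂)
    obtain rfl : t₁ = t₂ := hB ht₁ ht₂ h₁ h₂ htu₁ htu₂ hu₁u₂
    exact hforce u₁ h₁ htu₁ hu₁u₂

lemma atMostOneBlueNeighbor_psdStep_iterate_singleton (a : V) (n : ℕ) :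
    AtMostOneBlueNeighbor G ((psdStep G)^[n] {a}) := by
  induction n with
  | zero => exact atMostOneBlueNeighbor_singleton a
  | succ n ih => exact Function.iterate_succ_apply' _ n _ ▸ ih.psdStep

lemma isAcyclic_of_isPSDZeroForcingSet_singleton [Finite V] {a : V}
    (h : IsPSDZeroForcingSet G {a}) : G.IsAcyclic := by
  intro v c hc
  have hdescend (k j : ℕ) (hj : ∀ x ∈ c.support, x ∈ (psdStep G)^[k + j] {a}) :
      ∀ x ∈ c.support, x ∈ (psdStep G)^[k] {a} := by
    induction j generalizing k with
    | zero => exact hj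
    | succ j ih =>
      have hk := ih (k + 1) (by rwa [Nat.add_right_comm, Nat.add_assoc])
      rw [Function.iterate_succ_apply'] at hk
      exact AtMostOneBlueNeighbor.support_subset_of_isCycle
        (atMostOneBlueNeighbor_psdStep_iterate_singleton a k) hc hk
  obtain ⟨n, hn⟩ := isPSDZeroForcingSet_iff_exists_iterate_eq_univ.mp h
  have hblue := hdescend 0 n (by simp [hn])
  obtain ⟨y, hy, -, -, hvy, -⟩ := hc.exists_adj_ne_of_mem_support c.start_mem_support
  exact hvy.ne ((hblue v c.start_mem_support).trans (hblue y hy).symm)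

lemma exists_mem_psdStep_of_isAcyclic (hpc : G.Preconnected) (hac : G.IsAcyclic)
    (hne : B.Nonempty) (hnu : B ≠ Set.univ) : ∃ v ∉ B, v ∈ psdStep G B := by
  classical
  obtain ⟨b, hb⟩ := hne
  obtain ⟨y, hy⟩ := (Set.ne_univ_iff_exists_notMem B).mp hnu
  obtain ⟨d, -, hdB, hdB'⟩ := (hpc b y).some.exists_boundary_dart B hb hy
  refine ⟨d.snd, hdB', .inr ⟨hdB', d.fst, hdB, d.adj, fun w hw hdw hwv => ?_⟩⟩
  -- a white path from `w` to `d.snd` would close a cycle through `d.fst`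
  obtain ⟨p⟩ := hwv
  let q : G.Walk w d.snd := p.map (Embedding.induce {x | x ∉ B}).toHom
  have hq : d.fst ∉ q.bypass.support := fun h => by
    obtain ⟨x, -, hx⟩ := List.mem_map.mp (Walk.support_map _ p ▸ q.support_bypass_subset_support h)
    exact x.2 (by rwa [← hx] at hdB)
  have := (hac.subsingleton_path _ _).elim (Path.singleton d.adj)
    ⟨.cons hdw q.bypass, q.bypass_isPath.cons hq⟩
  simpa using (congrArg (fun p : G.Path _ _ => p.1.snd) this).symm

lemma isPSDZeroForcingSet_of_isAcyclic [Finite V] (hpc : G.Preconnected) (hac : G.IsAcyclic)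
    {S : Set V} (hS : S.Nonempty) : IsPSDZeroForcingSet G S := by
  obtain ⟨n, hn⟩ := exists_psdStep_iterate_eq_of_le G S
  refine isPSDZeroForcingSet_iff_exists_iterate_eq_univ.mpr ⟨n, by_contra fun hne => ?_⟩
  have hSn : ((psdStep G)^[n] S).Nonempty := hS.mono (monotone_psdStep_iterate G S n.zero_le)
  obtain ⟨v, hv, hv'⟩ := exists_mem_psdStep_of_isAcyclic hpc hac hSn hne
  exact hv (by rwa [hn (n + 1) n.le_succ, Function.iterate_succ_apply'])

lemma failedPSD_eq_zero_iff [Finite V] :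
    failedPSD G = 0 ↔ ∀ S : Set V, S.Nonempty → IsPSDZeroForcingSet G S := by
  constructor
  · intro h S hS
    by_contra hnot
    have hbdd : BddAbove {n | ∃ S : Set V, ¬ IsPSDZeroForcingSet G S ∧ S.ncard = n} :=
      ⟨Nat.card V, by rintro _ ⟨T, -, rfl⟩; exact T.ncard_le_card⟩
    have hle : S.ncard ≤ failedPSD G := le_csSup hbdd ⟨S, hnot, rfl⟩
    exact hS.ncard_pos.ne' (Nat.le_zero.mp (h ▸ hle))
  · intro h
    refine Nat.le_zero.mp (csSup_le' ?_)
    rintro _ ⟨S, hS, rfl⟩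
    obtain rfl | hne := S.eq_empty_or_nonempty
    · simp
    · exact absurd (h S hne) hS

lemma psdZFNumber_eq_one_iff [Finite V] [Nonempty V] :
    psdZFNumber G = 1 ↔ ∃ a, IsPSDZeroForcingSet G {a} := by
  constructor
  · intro h
    obtain ⟨S, hS, hS1⟩ : 1 ∈ {n | ∃ S : Set V, IsPSDZeroForcingSet G S ∧ S.ncard = n} :=
      h ▸ Nat.sInf_mem (Nat.nonempty_of_sInf_eq_succ h)
    obtain ⟨a, rfl⟩ := Set.ncard_eq_one.mp hS1
    exact ⟨a, hS⟩
  · rintro ⟨a, ha⟩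
    refine le_antisymm (Nat.sInf_le ⟨{a}, ha, Set.ncard_singleton a⟩) ?_
    refine Nat.one_le_iff_ne_zero.mpr fun h0 => ?_
    obtain ⟨S, hS, hS0⟩ | hempty := Nat.sInf_eq_zero.mp h0
    · exact not_isPSDZeroForcingSet_empty ((Set.ncard_eq_zero).mp hS0 ▸ hS)
    · exact hempty.subset ⟨{a}, ha, Set.ncard_singleton a⟩

end SimpleGraph

/-- `F₊(G) = 0` iff `Z₊(G) = 1`. -/
theorem failedPSD_eq_zero_iff_psdZFNumber_eq_one [Fintype V] [Nonempty V]
    (G : SimpleGraph V) :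
    failedPSD G = 0 ↔ psdZFNumber G = 1 := by
  rw [failedPSD_eq_zero_iff, psdZFNumber_eq_one_iff]
  constructor
  · intro h
    obtain ⟨a⟩ := ‹Nonempty V›
    exact ⟨a, h {a} (Set.singleton_nonempty a)⟩
  · rintro ⟨a, ha⟩ S hS
    exact isPSDZeroForcingSet_of_isAcyclic (preconnected_of_isPSDZeroForcingSet_singleton ha)
      (isAcyclic_of_isPSDZeroForcingSet_singleton ha) hS
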